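/- arXiv:1809.03057 — 2 statements merged into one kernel-verified Lean document; each statement's English description precedes it below -/
import Mathlib

section
/- For every nonterminal history h ∈ H \ Z and every action a ∈ A(h), the expectation of the baseline-enhanced sampled history-action value equals the importance-weighted sum of child values over terminal histories passing through h·a, with all baseline terms cancelling: E_{z∼ξ}[û_i^b(σ,h,a|z)] = Σ_{z∈Z, h·a⊑z} q(z)·û_i^b(σ,h·a|z)/ξ(h,a). -/
open Finset

variable {A : Type*} [Fintype A] [DecidableEq A]

/-- The set of legal actions at history `h`: those `a` with `h ++ [a] ∈ H`. -/
def legal (H : Finset (List A)) (h : List A) : Finset A :=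
  Finset.univ.filter fun a => h ++ [a] ∈ H

/-- Product of `f (h', a)` over all prefix steps `h'·a ⊑ h` of the history `h`.
With `f = ξ` this is the sampling probability `q(h)`; note `pathProd f [] = 1`. -/
def pathProd (f : List A → A → ℝ) (h : List A) : ℝ :=
  ∏ k : Fin h.length, f (h.take (k : ℕ)) (h.get k)

/-- `π^σ(h, z)`: product of `σ (h', a)` over all prefix steps `h'·a` with `h ⊏ h'·a ⊑ z`. -/
def sfxProd (σ : List A → A → ℝ) (h z : List A) : ℝ :=
  ∏ k : Fin z.length, if h.length ≤ (k : ℕ) then σ (z.take (k : ℕ)) (z.get k) else 1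

/-- `π^σ_{-i}(h)`: product of `σ (h', a)` over all prefix steps `h'·a ⊑ h` with `τ h' ≠ i`. -/
def oppProd {N : Type*} [DecidableEq N] (σ : List A → A → ℝ) (τ : List A → N) (i : N)
    (h : List A) : ℝ :=
  ∏ k : Fin h.length, if τ (h.take (k : ℕ)) ≠ i then σ (h.take (k : ℕ)) (h.get k) else 1

/-- The expected value `u_i^σ(h) = Σ_{z ∈ Z, h ⊑ z} π^σ(h,z)·u_i(z)`. -/
def expUtil (σ : List A → A → ℝ) (u : List A → ℝ) (Z : Finset (List A)) (h : List A) : ℝ :=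
  ∑ z ∈ Z.filter (fun z => h <+: z), sfxProd σ h z * u z

/-- The plain sampled history value `û_i(σ, h | z)`:
`u_i(h)` if `h = z`, `Σ_{a ∈ A(h)} σ(h,a)·û_i(σ,h,a|z)` if `h ⊏ z`, and `0` otherwise,
where `û_i(σ,h,a|z) = û_i(σ,h·a|z)/ξ(h,a)` if `h·a ⊑ z` and `0` otherwise. -/
noncomputable def uhat (ξ σ : List A → A → ℝ) (u : List A → ℝ) (H : Finset (List A))
    (z : List A) (h : List A) : ℝ :=
  if h = z then u z
  else if h <+: z then
    ∑ a ∈ legal H h, σ h a *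
      (if hpa : h ++ [a] <+: z then uhat ξ σ u H z (h ++ [a]) / ξ h a else 0)
  else 0
termination_by z.length - h.length
decreasing_by
  have := hpa.length_le
  simp only [List.length_append, List.length_singleton] at this ⊢
  omega

/-- The plain sampled history-action value `û_i(σ, h, a | z)`. -/
noncomputable def uhatA (ξ σ : List A → A → ℝ) (u : List A → ℝ) (H : Finset (List A))
    (z : List A) (h : List A) (a : A) : ℝ :=
  if h ++ [a] <+: z then uhat ξ σ u H z (h ++ [a]) / ξ h a else 0

/-- The baseline-enhanced sampled history value `û_i^b(σ, h | z)`: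
`u_i(h)` if `h = z`, `Σ_{a ∈ A(h)} σ(h,a)·û_i^b(σ,h,a|z)` if `h ⊏ z`, and `0` otherwise,
where `û_i^b(σ,h,a|z) = b(h,a) + (û_i^b(σ,h·a|z) − b(h,a))/ξ(h,a)` if `h·a ⊑ z`,
`b(h,a)` if `h ⊏ z` and `h·a ⋢ z`, and `0` otherwise. -/
noncomputable def uhatB (ξ σ : List A → A → ℝ) (u : List A → ℝ) (H : Finset (List A))
    (b : List A → A → ℝ) (z : List A) (h : List A) : ℝ :=
  if h = z then u z
  else if h <+: z then
    ∑ a ∈ legal H h, σ h a *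
      (if hpa : h ++ [a] <+: z then b h a + (uhatB ξ σ u H b z (h ++ [a]) - b h a) / ξ h a
       else b h a)
  else 0
termination_by z.length - h.length
decreasing_by
  have := hpa.length_le
  simp only [List.length_append, List.length_singleton] at this ⊢
  omega

/-- The baseline-enhanced sampled history-action value `û_i^b(σ, h, a | z)`. -/
noncomputable def uhatBA (ξ σ : List A → A → ℝ) (u : List A → ℝ) (H : Finset (List A))
    (b : List A → A → ℝ) (z : List A) (h : List A) (a : A) : ℝ :=
  if h ++ [a] <+: z then b h a + (uhatB ξ σ u H b z (h ++ [a]) - b h a) / ξ h a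
  else if h <+: z ∧ h ≠ z then b h a
  else 0

/-!
For a terminal `z ≠ h`, unfolding the definition gives
`û^b(σ,h,a|z) = 1[h·a ⊑ z]·û^b(σ,h·a|z)/ξ(h,a) + b(h,a)·(1[h ⊑ z] − 1[h·a ⊑ z]/ξ(h,a))`.
Since `ξ(g,·)` sums to one at every nonterminal `g`, the `ξ`-mass of the terminal histories
extending `g` is `q(g)`, so the factor multiplying `b(h,a)` has expectation
`q(h) − q(h)·ξ(h,a)/ξ(h,a) = 0`.
-/
theorem List.IsPrefix.exists_append_singleton_prefix {α : Type*} {h z : List α} (hp : h <+: z)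
    (hne : h ≠ z) : ∃ a, h ++ [a] <+: z :=
  ⟨_, List.concat_get_prefix hp (lt_of_le_of_ne hp.length_le (mt hp.eq_of_length hne))⟩

theorem List.eq_of_append_singleton_prefix {α : Type*} {h z : List α} {a a' : α}
    (ha : h ++ [a] <+: z) (ha' : h ++ [a'] <+: z) : a = a' := by
  rw [List.prefix_iff_eq_take] at ha ha'
  have : h ++ [a] = h ++ [a'] := by rw [ha, ha']; simp
  simpa using this

theorem List.pairwiseDisjoint_filter_append_singleton_prefix {α : Type*} [DecidableEq α]
    (S : Set α) (Z : Finset (List α)) (h : List α) :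
    S.PairwiseDisjoint fun a => Z.filter (h ++ [a] <+: ·) := by
  intro a _ a' _ hne
  rw [Function.onFun, Finset.disjoint_left]
  exact fun _ ha ha' =>
    hne (eq_of_append_singleton_prefix (Finset.mem_filter.1 ha).2 (Finset.mem_filter.1 ha').2)

theorem pathProd_append_singleton {α : Type*} (f : List α → α → ℝ) (h : List α) (a : α) :
    pathProd f (h ++ [a]) = pathProd f h * f h a := by
  rw [pathProd, ← Fin.prod_congr' _ (by simp : h.length + 1 = (h ++ [a]).length),
    Fin.prod_univ_castSucc]
  simp [pathProd, List.take_append_of_le_length, List.getElem_append_left]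

theorem mem_legal {H : Finset (List A)} {h : List A} {a : A} : a ∈ legal H h ↔ h ++ [a] ∈ H := by
  simp [legal]

section GameTree

variable {H Z : Finset (List A)}

theorem filter_prefix_eq_biUnion_legal (hclosed : ∀ h ∈ H, ∀ h' : List A, h' <+: h → h' ∈ H)
    (hZH : Z ⊆ H) {h : List A} (hh : h ∉ Z) :
    Z.filter (h <+: ·) = (legal H h).biUnion fun a => Z.filter (h ++ [a] <+: ·) := by
  ext z
  simp only [mem_filter, mem_biUnion, mem_legal]
  constructor
  · rintro ⟨hz, hp⟩
    obtain ⟨a, hpa⟩ := hp.exists_append_singleton_prefix (by rintro rfl; exact hh hz)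
    exact ⟨a, hclosed z (hZH hz) _ hpa, hz, hpa⟩
  · rintro ⟨a, -, hz, hpa⟩
    exact ⟨hz, (h.prefix_append [a]).trans hpa⟩

theorem sum_pathProd_filter_prefix (hclosed : ∀ h ∈ H, ∀ h' : List A, h' <+: h → h' ∈ H)
    (hZH : Z ⊆ H) (hterm : ∀ z ∈ Z, ∀ h ∈ H, z <+: h → z = h) {ξ : List A → A → ℝ}
    (hξsum : ∀ h ∈ H, h ∉ Z → ∑ a ∈ legal H h, ξ h a = 1) {h : List A} (hh : h ∈ H) :
    ∑ z ∈ Z.filter (h <+: ·), pathProd ξ z = pathProd ξ h := by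
  by_cases hhZ : h ∈ Z
  · have : Z.filter (h <+: ·) = {h} := by
      ext z
      simp only [mem_filter, mem_singleton]
      exact ⟨fun ⟨hz, hp⟩ => (hterm h hhZ z (hZH hz) hp).symm, by rintro rfl; simp [hhZ]⟩
    rw [this, sum_singleton]
  · rw [filter_prefix_eq_biUnion_legal hclosed hZH hhZ,
      sum_biUnion (List.pairwiseDisjoint_filter_append_singleton_prefix _ Z h)]
    calc ∑ a ∈ legal H h, ∑ z ∈ Z.filter (h ++ [a] <+: ·), pathProd ξ z
        = ∑ a ∈ legal H h, pathProd ξ h * ξ h a := sum_congr rfl fun a ha => by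
          rw [sum_pathProd_filter_prefix hclosed hZH hterm hξsum (mem_legal.1 ha),
            pathProd_append_singleton]
      _ = pathProd ξ h := by rw [← mul_sum, hξsum h hh hhZ, mul_one]
termination_by H.sup List.length - h.length
decreasing_by
  have := le_sup (f := List.length) (mem_legal.1 ha)
  simp only [List.length_append, List.length_singleton] at this ⊢
  omega

end GameTree

theorem uhatBA_eq_add_baseline (ξ σ : List A → A → ℝ) (u : List A → ℝ) (H : Finset (List A))
    (b : List A → A → ℝ) {z h : List A} (a : A) (hzh : h ≠ z) :
    uhatBA ξ σ u H b z h a =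
      (if h ++ [a] <+: z then uhatB ξ σ u H b z (h ++ [a]) / ξ h a else 0) +
        b h a * ((if h <+: z then 1 else 0) - (if h ++ [a] <+: z then 1 else 0) / ξ h a) := by
  unfold uhatBA
  by_cases hpa : h ++ [a] <+: z
  · simp only [hpa, (h.prefix_append [a]).trans hpa, if_true]
    ring
  · by_cases hp : h <+: z <;> simp [hpa, hp, hzh]

theorem baseline_terms_cancel_general
    (H Z : Finset (List A))
    (hclosed : ∀ h ∈ H, ∀ h' : List A, h' <+: h → h' ∈ H)
    (hZH : Z ⊆ H)
    (hterm : ∀ z ∈ Z, ∀ h ∈ H, z <+: h → z = h)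
    (ξ : List A → A → ℝ)
    (hξpos : ∀ h ∈ H, h ∉ Z → ∀ a ∈ legal H h, 0 < ξ h a)
    (hξsum : ∀ h ∈ H, h ∉ Z → ∑ a ∈ legal H h, ξ h a = 1)
    (σ : List A → A → ℝ)
    (u : List A → ℝ) (b : List A → A → ℝ)
    (h : List A) (hh : h ∈ H) (hhnt : h ∉ Z) (a : A) (ha : a ∈ legal H h) :
    (∑ z ∈ Z, pathProd ξ z * uhatBA ξ σ u H b z h a)
      = ∑ z ∈ Z.filter (fun z => h ++ [a] <+: z),
          pathProd ξ z * uhatB ξ σ u H b z (h ++ [a]) / ξ h a := by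
  have hξ : ξ h a ≠ 0 := (hξpos h hh hhnt a ha).ne'
  have hsplit : ∀ z ∈ Z, pathProd ξ z * uhatBA ξ σ u H b z h a =
      (if h ++ [a] <+: z then pathProd ξ z * uhatB ξ σ u H b z (h ++ [a]) / ξ h a else 0) +
        b h a * ((if h <+: z then pathProd ξ z else 0) -
          (if h ++ [a] <+: z then pathProd ξ z else 0) / ξ h a) := fun z hz => by
    rw [uhatBA_eq_add_baseline ξ σ u H b a (ne_of_mem_of_not_mem hz hhnt).symm]
    split_ifs <;> ring
  rw [sum_congr rfl hsplit, sum_add_distrib, ← mul_sum, sum_sub_distrib, ← sum_div,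
    ← sum_filter, ← sum_filter, ← sum_filter,
    sum_pathProd_filter_prefix hclosed hZH hterm hξsum hh,
    sum_pathProd_filter_prefix hclosed hZH hterm hξsum (mem_legal.1 ha),
    pathProd_append_singleton, mul_div_cancel_right₀ _ hξ, sub_self, mul_zero, add_zero]

/-- **Baseline terms cancel in expectation** (Lemma 4 in the paper).
For every nonterminal `h` and legal action `a` at `h`,
`E_{z∼ξ}[û_i^b(σ,h,a|z)] = Σ_{z∈Z, h·a⊑z} q(z)·û_i^b(σ,h·a|z)/ξ(h,a)`. -/
theorem baseline_terms_cancel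
    (H Z : Finset (List A))
    (hempty : ([] : List A) ∈ H)
    (hclosed : ∀ h ∈ H, ∀ h' : List A, h' <+: h → h' ∈ H)
    (hZH : Z ⊆ H)
    (hreach : ∀ h ∈ H, ∃ z ∈ Z, h <+: z)
    (hterm : ∀ z ∈ Z, ∀ h ∈ H, z <+: h → z = h)
    (hlegal : ∀ h ∈ H, h ∉ Z → (legal H h).Nonempty)
    (ξ : List A → A → ℝ)
    (hξpos : ∀ h ∈ H, h ∉ Z → ∀ a ∈ legal H h, 0 < ξ h a)
    (hξsum : ∀ h ∈ H, h ∉ Z → ∑ a ∈ legal H h, ξ h a = 1)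
    (σ : List A → A → ℝ)
    (hσnn : ∀ h ∈ H, h ∉ Z → ∀ a ∈ legal H h, 0 ≤ σ h a)
    (hσsum : ∀ h ∈ H, h ∉ Z → ∑ a ∈ legal H h, σ h a = 1)
    (u : List A → ℝ) (b : List A → A → ℝ)
    (h : List A) (hh : h ∈ H) (hhnt : h ∉ Z) (a : A) (ha : a ∈ legal H h) :
    (∑ z ∈ Z, pathProd ξ z * uhatBA ξ σ u H b z h a)
      = ∑ z ∈ Z.filter (fun z => h ++ [a] <+: z),
          pathProd ξ z * uhatB ξ σ u H b z (h ++ [a]) / ξ h a :=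
  baseline_terms_cancel_general H Z hclosed hZH hterm ξ hξpos hξsum σ u b h hh hhnt a ha
end

section
/- Under the oracle baseline b*(h,a) = u_i^σ(h·a), the counterfactual value estimates have zero variance at every visited history: for every nonterminal h ∈ H \ Z, every a ∈ A(h), and every z ∈ Z with h ⊏ z, v̂_i^{b*}(σ,h,a|z) = (π^σ_{-i}(h)/q(h))·u_i^σ(h·a). In particular the value of v̂_i^{b*}(σ,h,a|z) is the same for all z ∈ Z with h ⊏ z (so its conditional variance given reaching h is zero), and if τ(h) = i it equals v_i(σ,h,a)/q(h), the true counterfactual value of taking a at h importance-weighted by the probability of reaching h. -/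
/-!
With the oracle baseline the correction term `b*(h,a) + (û(h·a) − b*(h,a)) / ξ(h,a)` collapses to
`b*(h,a) = u^σ(h·a)` as soon as `û(h·a) = u^σ(h·a)`, and off the sampled path it is `b*(h,a)` by
definition. Hence, by induction on the distance to `z`, `û^{b*}(σ,h|z) = u^σ(h)` at every prefix `h`
of `z`: at `z` itself because `Z` is prefix-free, and inside by the one-step recursion
`u^σ(h) = Σ_a σ(h,a)·u^σ(h·a)`. So every sampled action value is the exact `u^σ(h·a)`, whatever `z`.
-/

open Finset

variable {A : Type*} [Fintype A] [DecidableEq A]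

namespace List

variable {α : Type*}

theorem IsPrefix.length_lt_of_ne {l₁ l₂ : List α} (hpre : l₁ <+: l₂) (hne : l₁ ≠ l₂) :
    l₁.length < l₂.length :=
  hpre.length_le.lt_of_ne fun hl => hne (hpre.eq_of_length hl)

theorem append_singleton_prefix_iff {l₁ l₂ : List α} (hpre : l₁ <+: l₂)
    (hlt : l₁.length < l₂.length) {a : α} : l₁ ++ [a] <+: l₂ ↔ a = l₂[l₁.length] := by
  constructor
  · intro hpa
    simpa using hpa.getElem (i := l₁.length) (by simp)
  · rintro rfl
    exact concat_get_prefix hpre hlt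

end List

open List

section

variable {A : Type*}

lemma oppProd_append {N : Type*} [DecidableEq N] (σ : List A → A → ℝ) (τ : List A → N) (i : N)
    (h : List A) (a : A) :
    oppProd σ τ i (h ++ [a]) = oppProd σ τ i h * (if τ h ≠ i then σ h a else 1) := by
  rw [oppProd, oppProd, ← Fin.prod_congr' _ (by simp : h.length + 1 = (h ++ [a]).length),
    Fin.prod_univ_castSucc]
  simp [take_append_of_le_length, getElem_append_left]

lemma sfxProd_eq_mul_sfxProd_append (σ : List A → A → ℝ) {h z : List A} {a : A}
    (hpa : h ++ [a] <+: z) : sfxProd σ h z = σ h a * sfxProd σ (h ++ [a]) z := by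
  have hlt : h.length < z.length := by simpa using hpa.length_le
  have hpre : h <+: z := (prefix_append h [a]).trans hpa
  have hsplit : ∀ k : Fin z.length, (if h.length ≤ k then σ (z.take k) (z.get k) else 1)
      = (if k = ⟨h.length, hlt⟩ then σ (z.take k) (z.get k) else 1) *
        (if (h ++ [a]).length ≤ k then σ (z.take k) (z.get k) else 1) := by
    intro k
    simp only [length_append, length_singleton, Fin.ext_iff]
    split_ifs <;> first | (exfalso; omega) | simp
  rw [sfxProd, sfxProd, Finset.prod_congr rfl fun k _ => hsplit k, Finset.prod_mul_distrib,
    Finset.prod_ite_eq', if_pos (Finset.mem_univ _), ← prefix_iff_eq_take.mp hpre,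
    get_eq_getElem, ← (append_singleton_prefix_iff hpre hlt).mp hpa]

variable [DecidableEq A]

lemma expUtil_eq_sum (σ : List A → A → ℝ) (u : List A → ℝ) (Z : Finset (List A)) {h : List A}
    (hh : h ∉ Z) (s : Finset A) (hs : ∀ z ∈ Z, ∀ a, h ++ [a] <+: z → a ∈ s) :
    expUtil σ u Z h = ∑ a ∈ s, σ h a * expUtil σ u Z (h ++ [a]) := by
  have fiber : ∀ z ∈ Z, ∑ a ∈ s, (if h ++ [a] <+: z then sfxProd σ h z * u z else 0)
      = if h <+: z then sfxProd σ h z * u z else 0 := by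
    intro z hz
    by_cases hpre : h <+: z
    · have hlt := hpre.length_lt_of_ne fun e => hh (e ▸ hz)
      simp_rw [append_singleton_prefix_iff hpre hlt]
      rw [Finset.sum_ite_eq', if_pos (hs z hz _ ((append_singleton_prefix_iff hpre hlt).2 rfl)),
        if_pos hpre]
    · have : ∀ a, ¬ h ++ [a] <+: z := fun a hpa => hpre ((prefix_append h [a]).trans hpa)
      simp [this, hpre]
  calc expUtil σ u Z h = ∑ z ∈ Z, if h <+: z then sfxProd σ h z * u z else 0 :=
        Finset.sum_filter ..
    _ = ∑ z ∈ Z, ∑ a ∈ s, if h ++ [a] <+: z then sfxProd σ h z * u z else 0 :=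
        Finset.sum_congr rfl fun z hz => (fiber z hz).symm
    _ = ∑ a ∈ s, ∑ z ∈ Z, σ h a * if h ++ [a] <+: z then sfxProd σ (h ++ [a]) z * u z else 0 := by
        rw [Finset.sum_comm]
        refine Finset.sum_congr rfl fun a _ => Finset.sum_congr rfl fun z _ => ?_
        split_ifs with hpa
        · rw [sfxProd_eq_mul_sfxProd_append σ hpa, mul_assoc]
        · rw [mul_zero]
    _ = ∑ a ∈ s, σ h a * expUtil σ u Z (h ++ [a]) := by
        simp only [expUtil, Finset.sum_filter, Finset.mul_sum]

lemma expUtil_of_mem {σ : List A → A → ℝ} {u : List A → ℝ} {Z : Finset (List A)}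
    (hfree : ∀ z ∈ Z, ∀ z' ∈ Z, z <+: z' → z = z') {z : List A} (hz : z ∈ Z) :
    expUtil σ u Z z = u z := by
  have : Z.filter (z <+: ·) = {z} := by
    ext z'
    simp only [Finset.mem_filter, Finset.mem_singleton]
    exact ⟨fun ⟨hz', hpre⟩ => (hfree z hz z' hz' hpre).symm, by rintro rfl; exact ⟨hz, prefix_rfl⟩⟩
  rw [expUtil, this, Finset.sum_singleton, sfxProd, Finset.prod_eq_one fun k _ => if_neg (by omega),
    one_mul]

end

def oracleBaseline (σ : List A → A → ℝ) (u : List A → ℝ) (Z : Finset (List A)) (h : List A)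
    (a : A) : ℝ :=
  expUtil σ u Z (h ++ [a])

section

variable {H Z : Finset (List A)} (hfree : ∀ z ∈ Z, ∀ z' ∈ Z, z <+: z' → z = z')
  (hprefix : ∀ z ∈ Z, ∀ h, h <+: z → h ∈ H) (ξ σ : List A → A → ℝ) (u : List A → ℝ)
include hfree hprefix

theorem uhatB_oracleBaseline_eq_expUtil {z : List A} (hz : z ∈ Z) {h : List A} (hpre : h <+: z) :
    uhatB ξ σ u H (oracleBaseline σ u Z) z h = expUtil σ u Z h := by
  rw [uhatB]
  by_cases heq : h = z
  · rw [if_pos heq, heq, expUtil_of_mem hfree hz]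
  have hnt : h ∉ Z := fun hh => heq (hfree h hh z hz hpre)
  have hs : ∀ z' ∈ Z, ∀ a, h ++ [a] <+: z' → a ∈ legal H h := fun z' hz' a hpa => by
    simpa [legal] using hprefix z' hz' _ hpa
  rw [if_neg heq, if_pos hpre, expUtil_eq_sum σ u Z hnt _ hs]
  refine Finset.sum_congr rfl fun a _ => congrArg _ ?_
  split_ifs with hpa
  · rw [uhatB_oracleBaseline_eq_expUtil hz hpa, oracleBaseline, sub_self, zero_div, add_zero]
  · rfl
termination_by z.length - h.length
decreasing_by
  have := hpa.length_le
  simp only [List.length_append, List.length_singleton] at this ⊢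
  omega

theorem uhatBA_oracleBaseline_eq_expUtil {z : List A} (hz : z ∈ Z) {h : List A} (hpre : h <+: z)
    (hne : h ≠ z) (a : A) :
    uhatBA ξ σ u H (oracleBaseline σ u Z) z h a = expUtil σ u Z (h ++ [a]) := by
  rw [uhatBA]
  split_ifs with hpa hoff
  · rw [uhatB_oracleBaseline_eq_expUtil hfree hprefix ξ σ u hz hpa, oracleBaseline, sub_self, zero_div, add_zero]
  · rfl
  · exact absurd ⟨hpre, hne⟩ hoff

end

theorem oracle_baseline_zero_variance_general
    (H Z : Finset (List A))
    (hclosed : ∀ h ∈ H, ∀ h' : List A, h' <+: h → h' ∈ H)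
    (hZH : Z ⊆ H)
    (hterm : ∀ z ∈ Z, ∀ h ∈ H, z <+: h → z = h)
    (ξ : List A → A → ℝ)
    (σ : List A → A → ℝ)
    {N : Type*} [DecidableEq N] (τ : List A → N) (i : N) (u : List A → ℝ) :
    ∀ h ∈ H, h ∉ Z → ∀ a ∈ legal H h, ∀ z ∈ Z, h <+: z → h ≠ z →
      (oppProd σ τ i h / pathProd ξ h *
          uhatBA ξ σ u H (fun h' a' => expUtil σ u Z (h' ++ [a'])) z h a
        = oppProd σ τ i h / pathProd ξ h * expUtil σ u Z (h ++ [a])) ∧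
      (∀ z' ∈ Z, h <+: z' → h ≠ z' →
        oppProd σ τ i h / pathProd ξ h *
            uhatBA ξ σ u H (fun h' a' => expUtil σ u Z (h' ++ [a'])) z h a
          = oppProd σ τ i h / pathProd ξ h *
              uhatBA ξ σ u H (fun h' a' => expUtil σ u Z (h' ++ [a'])) z' h a) ∧
      (τ h = i →
        oppProd σ τ i h / pathProd ξ h *
            uhatBA ξ σ u H (fun h' a' => expUtil σ u Z (h' ++ [a'])) z h a
          = oppProd σ τ i (h ++ [a]) * expUtil σ u Z (h ++ [a]) / pathProd ξ h) := by
  intro h _ _ a _ z hz hpre hne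
  have hfree : ∀ z ∈ Z, ∀ z' ∈ Z, z <+: z' → z = z' := fun z hz z' hz' => hterm z hz z' (hZH hz')
  have hprefix : ∀ z ∈ Z, ∀ h, h <+: z → h ∈ H := fun z hz => hclosed z (hZH hz)
  have hbaseline : (fun h' a' => expUtil σ u Z (h' ++ [a'])) = oracleBaseline σ u Z := rfl
  have key {z : List A} (hz : z ∈ Z) (hpre : h <+: z) (hne : h ≠ z) :=
    uhatBA_oracleBaseline_eq_expUtil (H := H) hfree hprefix ξ σ u hz hpre hne a
  rw [hbaseline, key hz hpre hne]
  refine ⟨rfl, fun z' hz' hpre' hne' => by rw [key hz' hpre' hne'], fun hτ => ?_⟩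
  rw [oppProd_append, hτ, if_neg (not_not_intro rfl), mul_one, div_mul_eq_mul_div]

/-- **The oracle baseline yields zero-variance counterfactual value estimates**
(Lemma 3 in the paper). Under `b*(h,a) = u_i^σ(h·a)`, for every nonterminal `h`,
legal `a ∈ A(h)`, and `z ∈ Z` with `h ⊏ z`:
`v̂_i^{b*}(σ,h,a|z) = (π^σ_{-i}(h)/q(h))·u_i^σ(h·a)`; in particular the estimate is the
same for all `z` with `h ⊏ z` (zero conditional variance given reaching `h`), and if
`τ(h) = i` it equals `v_i(σ,h,a)/q(h) = π^σ_{-i}(h·a)·u_i^σ(h·a)/q(h)`. -/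
theorem oracle_baseline_zero_variance
    (H Z : Finset (List A))
    (hempty : ([] : List A) ∈ H)
    (hclosed : ∀ h ∈ H, ∀ h' : List A, h' <+: h → h' ∈ H)
    (hZH : Z ⊆ H)
    (hreach : ∀ h ∈ H, ∃ z ∈ Z, h <+: z)
    (hterm : ∀ z ∈ Z, ∀ h ∈ H, z <+: h → z = h)
    (hlegal : ∀ h ∈ H, h ∉ Z → (legal H h).Nonempty)
    (ξ : List A → A → ℝ)
    (hξpos : ∀ h ∈ H, h ∉ Z → ∀ a ∈ legal H h, 0 < ξ h a)
    (hξsum : ∀ h ∈ H, h ∉ Z → ∑ a ∈ legal H h, ξ h a = 1)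
    (σ : List A → A → ℝ)
    (hσnn : ∀ h ∈ H, h ∉ Z → ∀ a ∈ legal H h, 0 ≤ σ h a)
    (hσsum : ∀ h ∈ H, h ∉ Z → ∑ a ∈ legal H h, σ h a = 1)
    {N : Type*} [DecidableEq N] (τ : List A → N) (i : N) (u : List A → ℝ) :
    ∀ h ∈ H, h ∉ Z → ∀ a ∈ legal H h, ∀ z ∈ Z, h <+: z → h ≠ z →
      (oppProd σ τ i h / pathProd ξ h *
          uhatBA ξ σ u H (fun h' a' => expUtil σ u Z (h' ++ [a'])) z h a
        = oppProd σ τ i h / pathProd ξ h * expUtil σ u Z (h ++ [a])) ∧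
      (∀ z' ∈ Z, h <+: z' → h ≠ z' →
        oppProd σ τ i h / pathProd ξ h *
            uhatBA ξ σ u H (fun h' a' => expUtil σ u Z (h' ++ [a'])) z h a
          = oppProd σ τ i h / pathProd ξ h *
              uhatBA ξ σ u H (fun h' a' => expUtil σ u Z (h' ++ [a'])) z' h a) ∧
      (τ h = i →
        oppProd σ τ i h / pathProd ξ h *
            uhatBA ξ σ u H (fun h' a' => expUtil σ u Z (h' ++ [a'])) z h a
          = oppProd σ τ i (h ++ [a]) * expUtil σ u Z (h ++ [a]) / pathProd ξ h) :=
  oracle_baseline_zero_variance_general H Z hclosed hZH hterm ξ σ τ i u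
end
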